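/- Let U₀, U₁, U₂ be well-founded partial orders on sets of ordinals with U₀ = U₁ ∩ U₂ (as sets, with the induced orders agreeing), and U₀ downward closed in both U₁ and U₂. Define U on U₁ ∪ U₂ by x ≤_U y iff x ≤_{U₁} y or x ≤_{U₂} y. Then U is a well-founded partial order, and both U₁ and U₂ are downward closed suborders of U. -/
import Mathlib


open Cardinal Set

structure WFPO where
  carrier : Set Ordinal
  le : Ordinal → Ordinal → Prop
  le_mem : ∀ x y, le x y → x ∈ carrier ∧ y ∈ carrier
  refl : ∀ x ∈ carrier, le x x
  trans : ∀ x y z, le x y → le y z → le x z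
  antisymm : ∀ x y, le x y → le y x → x = y
  wf : carrier.WellFoundedOn fun x y => le x y ∧ x ≠ y

def WFPO.Sub (U V : WFPO) : Prop :=
  U.carrier ⊆ V.carrier ∧
  (∀ x ∈ U.carrier, ∀ y ∈ U.carrier, (U.le x y ↔ V.le x y)) ∧
  (∀ x y, V.le x y → y ∈ U.carrier → x ∈ U.carrier)

lemma WFPO.exists_min (V : WFPO) (S : Set Ordinal) (h : (S ∩ V.carrier).Nonempty) :
    ∃ m ∈ S, m ∈ V.carrier ∧ ∀ x ∈ S, ¬(V.le x m ∧ x ≠ m) := by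
  obtain ⟨a, haS, haV⟩ := h
  have hwf : WellFounded fun a b : V.carrier => V.le a b ∧ (a : Ordinal) ≠ b := V.wf
  obtain ⟨m, hm, hmin⟩ := hwf.has_min {x : V.carrier | (x : Ordinal) ∈ S} ⟨⟨a, haV⟩, haS⟩
  refine ⟨m.1, hm, m.2, ?_⟩
  rintro x hx ⟨hle, hne⟩
  exact hmin ⟨x, (V.le_mem _ _ hle).1⟩ hx ⟨hle, hne⟩

/-- Amalgamation of well-founded partial orders over a common downward closed part. -/
theorem stmt10 (U₀ U₁ U₂ : WFPO)
    (hcap : U₀.carrier = U₁.carrier ∩ U₂.carrier)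
    (h01 : U₀.Sub U₁) (h02 : U₀.Sub U₂) :
    ∃ W : WFPO,
      W.carrier = U₁.carrier ∪ U₂.carrier ∧
      (∀ x y, W.le x y ↔ U₁.le x y ∨ U₂.le x y) ∧
      U₁.Sub W ∧ U₂.Sub W := by
  obtain ⟨hsub1, hiff1, hdc1⟩ := h01
  obtain ⟨hsub2, hiff2, hdc2⟩ := h02
  -- transfer lemmas
  have h12 : ∀ x y, U₁.le x y → y ∈ U₂.carrier → U₂.le x y := by
    intro x y hle hy2
    have hy0 : y ∈ U₀.carrier := by rw [hcap]; exact ⟨(U₁.le_mem _ _ hle).2, hy2⟩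
    have hx0 : x ∈ U₀.carrier := hdc1 x y hle hy0
    exact (hiff2 x hx0 y hy0).1 ((hiff1 x hx0 y hy0).2 hle)
  have h21 : ∀ x y, U₂.le x y → y ∈ U₁.carrier → U₁.le x y := by
    intro x y hle hy1
    have hy0 : y ∈ U₀.carrier := by rw [hcap]; exact ⟨hy1, (U₂.le_mem _ _ hle).2⟩
    have hx0 : x ∈ U₀.carrier := hdc2 x y hle hy0
    exact (hiff1 x hx0 y hy0).1 ((hiff2 x hx0 y hy0).2 hle)
  refine ⟨{ carrier := U₁.carrier ∪ U₂.carrier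
            le := fun x y => U₁.le x y ∨ U₂.le x y
            le_mem := ?_, refl := ?_, trans := ?_, antisymm := ?_, wf := ?_ },
          rfl, fun _ _ => Iff.rfl, ?_, ?_⟩
  · rintro x y (h | h)
    · exact ⟨Or.inl (U₁.le_mem _ _ h).1, Or.inl (U₁.le_mem _ _ h).2⟩
    · exact ⟨Or.inr (U₂.le_mem _ _ h).1, Or.inr (U₂.le_mem _ _ h).2⟩
  · rintro x (hx | hx)
    · exact Or.inl (U₁.refl x hx)
    · exact Or.inr (U₂.refl x hx)
  · rintro x y z (hxy | hxy) (hyz | hyz)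
    · exact Or.inl (U₁.trans x y z hxy hyz)
    · exact Or.inr (U₂.trans x y z (h12 x y hxy (U₂.le_mem _ _ hyz).1) hyz)
    · exact Or.inl (U₁.trans x y z (h21 x y hxy (U₁.le_mem _ _ hyz).1) hyz)
    · exact Or.inr (U₂.trans x y z hxy hyz)
  · rintro x y (hxy | hxy) (hyx | hyx)
    · exact U₁.antisymm x y hxy hyx
    · exact U₁.antisymm x y hxy (h21 y x hyx (U₁.le_mem _ _ hxy).1)
    · exact U₂.antisymm x y hxy (h12 y x hyx (U₂.le_mem _ _ hxy).1)
    · exact U₂.antisymm x y hxy hyx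
  · -- well-foundedness
    rw [Set.WellFoundedOn, WellFounded.wellFounded_iff_has_min]
    intro t ht
    set S : Set Ordinal := Subtype.val '' t with hS
    have hSne : S.Nonempty := ht.image _
    by_cases h0 : (S ∩ U₀.carrier).Nonempty
    · obtain ⟨m, hmS, hm0, hmin⟩ := U₀.exists_min S h0
      obtain ⟨m', hm't, hm'⟩ := hmS
      refine ⟨m', hm't, ?_⟩
      rintro x hx ⟨(hle | hle), hne⟩ <;> rw [hm'] at hle hne
      · have hx0 : (x : Ordinal) ∈ U₀.carrier := hdc1 x m hle hm0
        exact hmin x ⟨x, hx, rfl⟩ ⟨(hiff1 x hx0 m hm0).2 hle, hne⟩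
      · have hx0 : (x : Ordinal) ∈ U₀.carrier := hdc2 x m hle hm0
        exact hmin x ⟨x, hx, rfl⟩ ⟨(hiff2 x hx0 m hm0).2 hle, hne⟩
    · by_cases h1 : (S ∩ U₁.carrier).Nonempty
      · obtain ⟨m, hmS, hm1, hmin⟩ := U₁.exists_min S h1
        obtain ⟨m', hm't, hm'⟩ := hmS
        refine ⟨m', hm't, ?_⟩
        rintro x hx ⟨(hle | hle), hne⟩ <;> rw [hm'] at hle hne
        · exact hmin x ⟨x, hx, rfl⟩ ⟨hle, hne⟩
        · have hm0 : m ∈ U₀.carrier := by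
            rw [hcap]; exact ⟨hm1, (U₂.le_mem _ _ hle).2⟩
          exact h0 ⟨m, ⟨m', hm't, hm'⟩, hm0⟩
      · have h2 : (S ∩ U₂.carrier).Nonempty := by
          obtain ⟨a, ha⟩ := hSne
          obtain ⟨a', ha't, ha'⟩ := ha
          rcases a'.2 with h | h
          · exact absurd ⟨a, ⟨a', ha't, ha'⟩, ha' ▸ h⟩ h1
          · exact ⟨a, ⟨a', ha't, ha'⟩, ha' ▸ h⟩
        obtain ⟨m, hmS, hm2, hmin⟩ := U₂.exists_min S h2
        obtain ⟨m', hm't, hm'⟩ := hmS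
        refine ⟨m', hm't, ?_⟩
        rintro x hx ⟨(hle | hle), hne⟩ <;> rw [hm'] at hle hne
        · exact h1 ⟨x, ⟨x, hx, rfl⟩, (U₁.le_mem _ _ hle).1⟩
        · exact hmin x ⟨x, hx, rfl⟩ ⟨hle, hne⟩
  · exact ⟨subset_union_left, fun x hx y hy => ⟨Or.inl, fun h => h.elim id (fun h2 => h21 x y h2 hy)⟩,
      fun x y h hy => h.elim (fun h1 => (U₁.le_mem _ _ h1).1)
        (fun h2 => hsub1 (hdc2 x y h2 (by rw [hcap]; exact ⟨hy, (U₂.le_mem _ _ h2).2⟩)))⟩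
  · exact ⟨subset_union_right, fun x hx y hy => ⟨Or.inr, fun h => h.elim (fun h1 => h12 x y h1 hy) id⟩,
      fun x y h hy => h.elim (fun h1 => hsub2 (hdc1 x y h1 (by rw [hcap]; exact ⟨(U₁.le_mem _ _ h1).2, hy⟩)))
        (fun h2 => (U₂.le_mem _ _ h2).1)⟩
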